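/- The R-learner population loss identifies the CATE: suppose Y = b(X) + T·τ(X) + ε with E[ε | X, T] = 0, and let η(x) = E[Y|X=x] = b(x) + e(x)τ(x) where e(x) = P(T=1|X=x) ∈ (0,1). Then for any candidate function τ', E[((Y − η(X)) − (T − e(X))τ'(X))²] is minimized over measurable τ' at τ' = τ (up to sets where Var(T|X) · anything vanishes), since E[(Y−η(X)) − (T−e(X))τ(X) | X, T] = 0. -/

import Mathlib

open MeasureTheory

/-!
Write `ε = Y − b(X) − T·τ(X)`. Since `η(X) = b(X) + e(X)τ(X)`, the residual at `τ` is exactly `ε`,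
and the residual at any `τ'` is `ε − g` with `g = (T − e(X))(τ'(X) − τ(X))`, a function of `(X, T)`.
As `E[ε | X, T] = 0`, the noise `ε` is orthogonal in `L²` to every square-integrable function of
`(X, T)`, so `E[(ε − g)²] = E[ε²] + E[g²] ≥ E[ε²]`.
-/

section Orthogonality

variable {Ω : Type*} {m mΩ : MeasurableSpace Ω} {μ : Measure Ω} {ε g : Ω → ℝ}

theorem integral_mul_eq_zero_of_condExp_eq_zero (hm : m ≤ mΩ) [SigmaFinite (μ.trim hm)]
    (hg : StronglyMeasurable[m] g) (hgε : Integrable (g * ε) μ) (hε : Integrable ε μ)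
    (hε0 : μ[ε | m] =ᵐ[μ] 0) :
    ∫ ω, g ω * ε ω ∂μ = 0 := by
  have hpull : μ[g * ε | m] =ᵐ[μ] 0 := by
    filter_upwards [condExp_mul_of_stronglyMeasurable_left hg hgε hε, hε0] with ω hpull hω
    simp [hpull, hω]
  calc ∫ ω, g ω * ε ω ∂μ = ∫ ω, (μ[g * ε | m]) ω ∂μ := (integral_condExp hm).symm
    _ = 0 := by simp [integral_congr_ae hpull]

theorem integral_sub_sq_eq_add_of_condExp_eq_zero [IsFiniteMeasure μ] (hm : m ≤ mΩ)
    (hg : StronglyMeasurable[m] g) (hε : MemLp ε 2 μ) (hg2 : MemLp g 2 μ)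
    (hε0 : μ[ε | m] =ᵐ[μ] 0) :
    ∫ ω, (ε ω - g ω) ^ 2 ∂μ = ∫ ω, ε ω ^ 2 ∂μ + ∫ ω, g ω ^ 2 ∂μ := by
  have hgε : Integrable (g * ε) μ := hg2.integrable_mul hε
  have hcross : ∫ ω, g ω * ε ω ∂μ = 0 :=
    integral_mul_eq_zero_of_condExp_eq_zero hm hg hgε (hε.integrable one_le_two) hε0
  have hcross2 : Integrable (fun ω => 2 * (g ω * ε ω)) μ := hgε.const_mul 2
  have hεcross : Integrable (fun ω => ε ω ^ 2 - 2 * (g ω * ε ω)) μ :=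
    hε.integrable_sq.sub hcross2
  have hexpand : (fun ω => (ε ω - g ω) ^ 2) = fun ω => ε ω ^ 2 - 2 * (g ω * ε ω) + g ω ^ 2 := by
    funext ω; ring
  rw [hexpand, integral_add hεcross hg2.integrable_sq, integral_sub hε.integrable_sq hcross2,
    integral_const_mul, hcross, mul_zero, sub_zero]

end Orthogonality

theorem rlearner_loss_identifies_cate_general {Ω 𝒳 : Type*} {mΩ : MeasurableSpace Ω}
    [MeasurableSpace 𝒳] (μ : Measure Ω) [IsProbabilityMeasure μ]
    (X : Ω → 𝒳) (hX : Measurable X) (Tr : Ω → ℝ) (hTr : Measurable Tr)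
    (hTr01 : ∀ ω, Tr ω = 0 ∨ Tr ω = 1)
    (Y : Ω → ℝ) (b τ e : 𝒳 → ℝ)
    (hτ : Measurable τ) (he : Measurable e)
    -- `E[ε | X, T] = 0` where `ε = Y − b(X) − T·τ(X)`
    (hε : μ[(fun ω => Y ω - (b (X ω) + Tr ω * τ (X ω))) |
        MeasurableSpace.comap (fun ω => (X ω, Tr ω)) inferInstance] =ᵐ[μ] 0)
    -- finite second moments
    (hY2 : MemLp Y 2 μ) (hb2 : MemLp (fun ω => b (X ω)) 2 μ)
    (hτ2 : MemLp (fun ω => τ (X ω)) 2 μ) :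
    (μ[(fun ω => (Y ω - (b (X ω) + e (X ω) * τ (X ω)))
          - (Tr ω - e (X ω)) * τ (X ω)) |
        MeasurableSpace.comap (fun ω => (X ω, Tr ω)) inferInstance] =ᵐ[μ] 0) ∧
    (∀ τ' : 𝒳 → ℝ, Measurable τ' →
      Integrable (fun ω => ((Y ω - (b (X ω) + e (X ω) * τ (X ω)))
          - (Tr ω - e (X ω)) * τ' (X ω)) ^ 2) μ →
      ∫ ω, ((Y ω - (b (X ω) + e (X ω) * τ (X ω)))
          - (Tr ω - e (X ω)) * τ (X ω)) ^ 2 ∂μ ≤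
        ∫ ω, ((Y ω - (b (X ω) + e (X ω) * τ (X ω)))
          - (Tr ω - e (X ω)) * τ' (X ω)) ^ 2 ∂μ) := by
  set m := MeasurableSpace.comap (fun ω => (X ω, Tr ω)) inferInstance
  have hm : m ≤ mΩ := (hX.prodMk hTr).comap_le
  set ε : Ω → ℝ := fun ω => Y ω - (b (X ω) + Tr ω * τ (X ω))
  have hresidual : ∀ ω, (Y ω - (b (X ω) + e (X ω) * τ (X ω)))
      - (Tr ω - e (X ω)) * τ (X ω) = ε ω := fun ω => by ring
  refine ⟨funext hresidual ▸ hε, fun τ' hτ' hInt => ?_⟩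
  have hTτ2 : MemLp (fun ω => Tr ω * τ (X ω)) 2 μ := by
    refine hτ2.of_le (hTr.mul (hτ.comp hX)).aestronglyMeasurable (.of_forall fun ω => ?_)
    rcases hTr01 ω with h | h <;> simp [h]
  have hε2 : MemLp ε 2 μ := hY2.sub (hb2.add hTτ2)
  set g : Ω → ℝ := fun ω => (Tr ω - e (X ω)) * (τ' (X ω) - τ (X ω))
  have hsplit : ∀ ω, (Y ω - (b (X ω) + e (X ω) * τ (X ω)))
      - (Tr ω - e (X ω)) * τ' (X ω) = ε ω - g ω := fun ω => by ring
  simp only [hresidual, hsplit] at hInt ⊢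
  have hgm : StronglyMeasurable[m] g :=
    ((measurable_snd.sub (he.comp measurable_fst)).mul
      ((hτ'.comp measurable_fst).sub (hτ.comp measurable_fst))).comp
      (comap_measurable _) |>.stronglyMeasurable
  have hR2 : MemLp (fun ω => ε ω - g ω) 2 μ :=
    (memLp_two_iff_integrable_sq (hε2.1.sub (hgm.mono hm).aestronglyMeasurable)).2 hInt
  have hg2 : MemLp g 2 μ := by
    convert hε2.sub hR2 using 1
    ext ω; simp
  rw [integral_sub_sq_eq_add_of_condExp_eq_zero hm hgm hε2 hg2 hε]
  exact le_add_of_nonneg_right (integral_nonneg fun ω => sq_nonneg _)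

/-- The R-learner population loss identifies the CATE: under `Y = b(X) + T·τ(X) + ε` with
`E[ε|X,T] = 0`, `η(x) = b(x) + e(x)τ(x)` and overlap `0 < e(x) < 1`, the residual
`(Y − η(X)) − (T − e(X))τ(X)` has zero conditional mean given `(X,T)`, and `τ` minimizes
the population squared loss `E[((Y − η(X)) − (T − e(X))τ'(X))²]` over measurable `τ'`. -/
theorem rlearner_loss_identifies_cate {Ω 𝒳 : Type*} {mΩ : MeasurableSpace Ω}
    [MeasurableSpace 𝒳] (μ : Measure Ω) [IsProbabilityMeasure μ]
    (X : Ω → 𝒳) (hX : Measurable X) (Tr : Ω → ℝ) (hTr : Measurable Tr)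
    (hTr01 : ∀ ω, Tr ω = 0 ∨ Tr ω = 1)
    (Y : Ω → ℝ) (b τ e : 𝒳 → ℝ)
    (hb : Measurable b) (hτ : Measurable τ) (he : Measurable e)
    (hoverlap : ∀ x, 0 < e x ∧ e x < 1)
    -- `E[ε | X, T] = 0` where `ε = Y − b(X) − T·τ(X)`
    (hε : μ[(fun ω => Y ω - (b (X ω) + Tr ω * τ (X ω))) |
        MeasurableSpace.comap (fun ω => (X ω, Tr ω)) inferInstance] =ᵐ[μ] 0)
    -- `e` is the propensity score: `E[T | X] = e(X)`
    (hprop : μ[Tr | MeasurableSpace.comap X inferInstance] =ᵐ[μ] fun ω => e (X ω))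
    -- finite second moments
    (hY2 : MemLp Y 2 μ) (hb2 : MemLp (fun ω => b (X ω)) 2 μ)
    (hτ2 : MemLp (fun ω => τ (X ω)) 2 μ) :
    (μ[(fun ω => (Y ω - (b (X ω) + e (X ω) * τ (X ω)))
          - (Tr ω - e (X ω)) * τ (X ω)) |
        MeasurableSpace.comap (fun ω => (X ω, Tr ω)) inferInstance] =ᵐ[μ] 0) ∧
    (∀ τ' : 𝒳 → ℝ, Measurable τ' →
      Integrable (fun ω => ((Y ω - (b (X ω) + e (X ω) * τ (X ω)))
          - (Tr ω - e (X ω)) * τ' (X ω)) ^ 2) μ →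
      ∫ ω, ((Y ω - (b (X ω) + e (X ω) * τ (X ω)))
          - (Tr ω - e (X ω)) * τ (X ω)) ^ 2 ∂μ ≤
        ∫ ω, ((Y ω - (b (X ω) + e (X ω) * τ (X ω)))
          - (Tr ω - e (X ω)) * τ' (X ω)) ^ 2 ∂μ) :=
  rlearner_loss_identifies_cate_general (mΩ := mΩ) μ X hX Tr hTr hTr01 Y b τ e hτ he hε hY2 hb2 hτ2
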